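/- arXiv:2305.15209 — 2 statements merged into one kernel-verified Lean document; each statement's English description precedes it below -/
import Mathlib

section
/- Let X be a topological space and let F be a sheaf of types on X (an object of the category of sheaves of types for the Grothendieck topology of open covers on the opens of X). Then there exist a type I, a sheaf S of types on X, a monomorphism S ⟶ constantSheaf(I) into the constant sheaf at I, and an epimorphism S ⟶ F in the category of sheaves on X. In other words, every sheaf on a topological space is a subquotient of a constant sheaf; this expresses that the global sections geometric morphism Sh(X) → Set is localic. -/
/-!
Over a preorder, a presheaf `F` of types is a quotient of the subpresheaf `P` of the constant
presheaf at `Σ U, F(U)` with `P(V) = {(U, s) | V ≤ U}`, the quotient map restricting `s` to `V`.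
Sheafification is left exact and a left adjoint, so it keeps the monomorphism and the
epimorphism; it turns the constant presheaf into the constant sheaf and leaves a sheaf unchanged.
-/

open CategoryTheory TopologicalSpace Opposite

universe u

namespace CategoryTheory

variable {C : Type u} [Preorder C] (F : Cᵒᵖ ⥤ Type u)

def Functor.sectionsAbove : Subfunctor ((Functor.const Cᵒᵖ).obj (Σ U : C, F.obj (op U))) where
  obj V := {s | V.unop ≤ s.1}
  map f _ hs := (leOfHom f.unop).trans hs

def Functor.restrictSectionsAbove : F.sectionsAbove.toFunctor ⟶ F where
  app V := TypeCat.ofHom fun s => F.map (homOfLE s.2).op s.1.2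
  naturality V W f := by
    ext s
    exact F.map_comp_apply (homOfLE s.2).op f s.1.2

instance (V : Cᵒᵖ) : Epi (F.restrictSectionsAbove.app V) :=
  (epi_iff_surjective _).2 fun t => ⟨⟨⟨V.unop, t⟩, le_rfl⟩, F.map_id_apply V t⟩

instance : Epi F.restrictSectionsAbove :=
  NatTrans.epi_of_epi_app _

theorem Presheaf.exists_mono_const_epi :
    ∃ (I : Type u) (P : Cᵒᵖ ⥤ Type u) (m : P ⟶ (Functor.const Cᵒᵖ).obj I) (e : P ⟶ F),
      Mono m ∧ Epi e :=
  ⟨_, _, F.sectionsAbove.ι, F.restrictSectionsAbove, inferInstance, inferInstance⟩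

theorem Sheaf.exists_mono_constantSheaf_epi (J : GrothendieckTopology C) [HasSheafify J (Type u)]
    (F : Sheaf J (Type u)) :
    ∃ (I : Type u) (S : Sheaf J (Type u)) (m : S ⟶ (constantSheaf J (Type u)).obj I) (e : S ⟶ F),
      Mono m ∧ Epi e := by
  obtain ⟨I, P, m, e, _, _⟩ := Presheaf.exists_mono_const_epi F.obj
  exact ⟨I, (presheafToSheaf J _).obj P, (presheafToSheaf J _).map m,
    (presheafToSheaf J _).map e ≫ (sheafificationAdjunction J _).counit.app F,
    Functor.map_mono _ _, epi_comp _ _⟩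

end CategoryTheory

/-- Every sheaf of types on a topological space is a subquotient of a constant sheaf:
there is a sheaf `S` with a monomorphism into a constant sheaf and an epimorphism
onto `F`. This expresses that the global sections geometric morphism
`Sh(X) → Set` is localic. -/
theorem sheaf_is_subquotient_of_constant {X : Type u} [TopologicalSpace X]
    (F : Sheaf (Opens.grothendieckTopology X) (Type u)) :
    ∃ (I : Type u) (S : Sheaf (Opens.grothendieckTopology X) (Type u))
      (m : S ⟶ (constantSheaf (Opens.grothendieckTopology X) (Type u)).obj I)
      (e : S ⟶ F), Mono m ∧ Epi e :=
  Sheaf.exists_mono_constantSheaf_epi _ F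
end

section
/- Let X be a topological space and let F be a sheaf of types on X (an object of the category of sheaves of types for the Grothendieck topology of open covers on the opens of X). Then there exist a type I, a family (S_i)_{i ∈ I} of sheaves on X each of which is subterminal (i.e. the unique morphism S_i ⟶ ⊤ to the terminal sheaf is a monomorphism), and an epimorphism ∐_{i ∈ I} S_i ⟶ F from their coproduct onto F. In other words, every sheaf on a topological space is covered by subterminal sheaves (corresponding to local sections of the associated étale map over open subsets). -/
/-! Every section of a sheaf `F` over `U` is a map from the representable sheaf of `U`, so the
representables cover `F`; on a space they are subterminal because `Opens X` is a preorder. -/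

open CategoryTheory TopologicalSpace CategoryTheory.Limits

instance sheafHasColimitsOfShapeDiscrete {X : Type u} [TopologicalSpace X] (I : Type u) :
    HasColimitsOfShape (Discrete I) (Sheaf (Opens.grothendieckTopology X) (Type u)) :=
  Sheaf.instHasColimitsOfShape

open Opposite

namespace CategoryTheory

lemma Sheaf.mono_of_subsingleton {C : Type*} [Category C] {J : GrothendieckTopology C}
    {F G : Sheaf J (Type w)} [∀ U, Subsingleton (F.obj.obj U)] (f : F ⟶ G) : Mono f :=
  ⟨fun _ _ _ ↦ Sheaf.hom_ext (by ext; exact Subsingleton.elim _ _)⟩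

lemma GrothendieckTopology.epi_sigmaDesc_yonedaEquiv_symm {C : Type u} [Category.{v} C]
    (J : GrothendieckTopology C) [J.Subcanonical] (F : Sheaf J (Type v))
    [HasCoproduct fun p : Σ U : C, F.obj.obj (op U) ↦ J.yoneda.obj p.1] :
    Epi (Limits.Sigma.desc fun p : Σ U : C, F.obj.obj (op U) ↦ J.yonedaEquiv.symm p.2) where
  left_cancellation f g h := Sheaf.hom_ext <| by
    ext ⟨U⟩ s
    have hs : J.yonedaEquiv.symm s ≫ f = J.yonedaEquiv.symm s ≫ g := by
      simpa using
        Sigma.ι (fun p : Σ U : C, F.obj.obj (op U) ↦ J.yoneda.obj p.1) ⟨U, s⟩ ≫= h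
    simpa [yonedaEquiv_comp] using congrArg J.yonedaEquiv hs

lemma GrothendieckTopology.mono_from_yoneda_obj_of_isThin {C : Type u} [Category.{v} C]
    [Quiver.IsThin C] (J : GrothendieckTopology C) [J.Subcanonical] {U : C}
    {G : Sheaf J (Type v)} (f : J.yoneda.obj U ⟶ G) : Mono f :=
  have (V : Cᵒᵖ) : Subsingleton ((J.yoneda.obj U).obj.obj V) :=
    inferInstanceAs <| Subsingleton (V.unop ⟶ U)
  Sheaf.mono_of_subsingleton f

end CategoryTheory

-- A section of `yoneda.obj U` over `V` is the inequality `V ≤ U`, which is local in `V`.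
instance TopologicalSpace.Opens.subcanonical_grothendieckTopology {X : Type u}
    [TopologicalSpace X] :
    (Opens.grothendieckTopology X).Subcanonical :=
  .of_isSheaf_yoneda_obj _ fun _ _ S hS x _ ↦
    ⟨homOfLE fun v hv ↦ by
        obtain ⟨W, f, hf, hvW⟩ := hS v hv
        exact leOfHom (x f hf) hvW,
      fun _ _ _ ↦ Subsingleton.elim (α := _ ⟶ _) _ _,
      fun _ _ ↦ Subsingleton.elim (α := _ ⟶ _) _ _⟩

/-- Every sheaf of types on a topological space is covered by subterminal sheaves:
there is a family `(S i)` of sheaves, each admitting a monomorphism to the terminal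
sheaf, together with an epimorphism from their coproduct onto `F`. -/
theorem sheaf_covered_by_subterminals {X : Type u} [TopologicalSpace X]
    (F : Sheaf (Opens.grothendieckTopology X) (Type u)) :
    ∃ (I : Type u) (S : I → Sheaf (Opens.grothendieckTopology X) (Type u)),
      (∀ i, Mono (terminal.from (S i))) ∧
      ∃ e : (∐ S) ⟶ F, Epi e :=
  ⟨_, fun p : Σ U : Opens X, F.obj.obj (op U) ↦ (Opens.grothendieckTopology X).yoneda.obj p.1,
    fun _ ↦ GrothendieckTopology.mono_from_yoneda_obj_of_isThin _ _, _,
    GrothendieckTopology.epi_sigmaDesc_yonedaEquiv_symm _ F⟩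
end
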